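/- Let d_f^K be the pseudometric with weight f = a² and K = B̄(x₀,r), and suppose x₀ ∉ ∂ω lies on a geodesic joining x and y in (ℝ³, d_{a²}) with x₀ ∉ {x,y}. Then there exists r₀ > 0 such that for all 0 < r < r₀: d_{a²}^{B̄(x₀,r)}(x,y) = d_{a²}(x,y) − 2a(x₀)² r. -/

import Mathlib

open MeasureTheory Pointwise
open scoped Classical

noncomputable section

/-- Euclidean three-space. -/
abbrev E3 := EuclideanSpace ℝ (Fin 3)

/-- Weighted geodesic distance: infimum of the `f`-weighted length over Lipschitz
curves `γ : [0,1] → ℝ³` joining `x` and `y`. -/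
noncomputable def wdist (f : E3 → ℝ) (x y : E3) : ℝ :=
  sInf { L : ℝ | ∃ γ : ℝ → E3, (∃ K : NNReal, LipschitzWith K γ) ∧ γ 0 = x ∧ γ 1 = y ∧
    L = ∫ s in (0:ℝ)..1, f (γ s) * ‖deriv γ s‖ }

/-- Weighted distance from a point to a set. -/
noncomputable def wdistSet (f : E3 → ℝ) (x : E3) (K : Set E3) : ℝ :=
  sInf ((fun z => wdist f x z) '' K)

/-- The pseudometric `d_f^K(x,y) = min (d_f x y) (d_f(x,K) + d_f(y,K))`. -/
noncomputable def wdistK (f : E3 → ℝ) (K : Set E3) (x y : E3) : ℝ :=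
  min (wdist f x y) (wdistSet f x K + wdistSet f y K)

/-- The pinning term `a`, equal to `b` on `ω` and `1` elsewhere. -/
noncomputable def aFun (b : ℝ) (ω : Set E3) : E3 → ℝ :=
  fun x => if x ∈ ω then b else 1

open intervalIntegral Filter Set


theorem lip_deriv_le (K : NNReal) (γ : ℝ → E3) (h : LipschitzWith K γ) (s : ℝ) : ‖deriv γ s‖ ≤ K := by
  by_cases hd : DifferentiableAt ℝ γ s
  · have hs := hasDerivAt_iff_tendsto_slope.1 hd.hasDerivAt
    have : Tendsto (fun y => ‖slope γ s y‖) (nhdsWithin s {s}ᶜ) (nhds ‖deriv γ s‖) :=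
      (continuous_norm.tendsto _).comp hs
    refine le_of_tendsto this ?_
    filter_upwards [self_mem_nhdsWithin] with y hy
    have : ‖slope γ s y‖ = ‖γ y - γ s‖ / ‖y - s‖ := by
      rw [slope, vsub_eq_sub, norm_smul, norm_inv, div_eq_inv_mul]
    rw [this, div_le_iff₀ (by simpa [sub_eq_zero] using (hy : y ≠ s))]
    simpa [dist_eq_norm] using h.dist_le_mul y s
  · simp [deriv_zero_of_not_differentiableAt hd]

theorem deriv_measurable_norm (γ : ℝ → E3) : Measurable fun s => ‖deriv γ s‖ :=
  (measurable_deriv γ).norm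

theorem integrand_integrable {f : E3 → ℝ} (hfm : Measurable f) (hf1 : ∀ z, f z ≤ 1)
    (hf0 : ∀ z, 0 ≤ f z) {K : NNReal} {γ : ℝ → E3} (h : LipschitzWith K γ) (u v : ℝ) :
    IntervalIntegrable (fun s => f (γ s) * ‖deriv γ s‖) volume u v := by
  have hm : Measurable fun s => f (γ s) * ‖deriv γ s‖ :=
    (hfm.comp h.continuous.measurable).mul (measurable_deriv γ).norm
  refine IntervalIntegrable.mono_fun' (g := fun _ => (K:ℝ)) intervalIntegrable_const
    hm.aestronglyMeasurable ?_
  refine Eventually.of_forall fun s => ?_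
  have h1 : |f (γ s) * ‖deriv γ s‖| = f (γ s) * ‖deriv γ s‖ := by
    exact abs_of_nonneg (mul_nonneg (hf0 _) (norm_nonneg _))
  show ‖f (γ s) * ‖deriv γ s‖‖ ≤ (K:ℝ)
  rw [Real.norm_eq_abs, h1]
  calc f (γ s) * ‖deriv γ s‖ ≤ 1 * ‖deriv γ s‖ :=
        mul_le_mul_of_nonneg_right (hf1 _) (norm_nonneg _)
    _ ≤ (K:ℝ) := by simpa using lip_deriv_le K γ h s

theorem slope_seq_lim {F : ℝ → E3} {c : ℝ} {v : E3} (hF : HasDerivAt F v c) :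
    Filter.Tendsto (fun n : ℕ => ((n:ℝ)+1) • (F (c + ((n:ℝ)+1)⁻¹) - F c)) atTop (nhds v) := by
  have hs := hasDerivAt_iff_tendsto_slope.1 hF
  have hseq : Tendsto (fun n : ℕ => c + ((n:ℝ)+1)⁻¹) atTop (nhdsWithin c {c}ᶜ) := by
    apply tendsto_nhdsWithin_of_tendsto_nhds_of_eventually_within
    · have : Tendsto (fun n : ℕ => ((n:ℝ)+1)⁻¹) atTop (nhds 0) := by
        simpa using tendsto_one_div_add_atTop_nhds_zero_nat (𝕜 := ℝ)
      simpa using tendsto_const_nhds.add this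
    · refine Eventually.of_forall fun n => ?_
      have : (0:ℝ) < ((n:ℝ)+1)⁻¹ := by positivity
      simp only [Set.mem_compl_iff, Set.mem_singleton_iff]
      intro hc; nlinarith [hc]
  refine (hs.comp hseq).congr fun n => ?_
  show slope F c (c + ((n:ℝ)+1)⁻¹) = _
  rw [slope_def_module, show c + ((n:ℝ)+1)⁻¹ - c = ((n:ℝ)+1)⁻¹ by ring, inv_inv]

-- FTC for Lipschitz curves
theorem lip_ftc {K : NNReal} {γ : ℝ → E3} (h : LipschitzWith K γ) (a b : ℝ) :
    γ b - γ a = ∫ t in a..b, deriv γ t := by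
  have hcont : Continuous γ := h.continuous
  have hint : ∀ u v : ℝ, IntervalIntegrable γ volume u v := fun u v =>
    (hcont.intervalIntegrable u v)
  -- slope functions
  set g : ℕ → ℝ → E3 := fun n t => ((n:ℝ)+1) • (γ (t + ((n:ℝ)+1)⁻¹) - γ t) with hg
  have hpos : ∀ n : ℕ, (0:ℝ) < ((n:ℝ)+1)⁻¹ := fun n => by positivity
  -- integral identity
  have key : ∀ n : ℕ, ∫ t in a..b, g n t =
      ((n:ℝ)+1) • ((∫ t in b..(b + ((n:ℝ)+1)⁻¹), γ t) - ∫ t in a..(a + ((n:ℝ)+1)⁻¹), γ t) := by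
    intro n
    set h' : ℝ := ((n:ℝ)+1)⁻¹
    have h1 : ∫ t in a..b, g n t = ((n:ℝ)+1) • ((∫ t in a..b, γ (t + h')) - ∫ t in a..b, γ t) := by
      rw [hg]
      rw [intervalIntegral.integral_smul, intervalIntegral.integral_sub
        (Continuous.intervalIntegrable (by continuity : Continuous fun t : ℝ => γ (t + ((n:ℝ)+1)⁻¹)) a b) (hint a b)]
    rw [h1, integral_comp_add_right]
    congr 1
    have h2 : (∫ t in (a+h')..(b+h'), γ t) = (∫ t in (a+h')..b, γ t) + ∫ t in b..(b+h'), γ t :=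
      (integral_add_adjacent_intervals (hint _ _) (hint _ _)).symm
    have h3 : (∫ t in a..b, γ t) = (∫ t in a..(a+h'), γ t) + ∫ t in (a+h')..b, γ t :=
      (integral_add_adjacent_intervals (hint _ _) (hint _ _)).symm
    rw [h2, h3]; abel
  -- limits of endpoint averages
  have havg : ∀ c : ℝ, Tendsto (fun n : ℕ => ((n:ℝ)+1) • ∫ t in c..(c + ((n:ℝ)+1)⁻¹), γ t)
      atTop (nhds (γ c)) := by
    intro c
    have hF : HasDerivAt (fun u => ∫ t in c..u, γ t) (γ c) c :=
      intervalIntegral.integral_hasDerivAt_right (hint c c)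
        (hcont.stronglyMeasurable.stronglyMeasurableAtFilter) hcont.continuousAt
    have := slope_seq_lim hF
    simpa using this
  -- dominated convergence
  have hdct : Tendsto (fun n : ℕ => ∫ t in a..b, g n t) atTop (nhds (∫ t in a..b, deriv γ t)) := by
    apply intervalIntegral.tendsto_integral_filter_of_dominated_convergence (fun _ => (K:ℝ))
    · refine Eventually.of_forall fun n => ?_
      have hc : Continuous (g n) := by
        rw [hg]
        exact (continuous_const : Continuous fun _ : ℝ => ((n:ℝ)+1)).smul ((hcont.comp (continuous_id.add continuous_const)).sub hcont)
      exact hc.aestronglyMeasurable.restrict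
    · refine Eventually.of_forall fun n => (Eventually.of_forall fun t _ => ?_)
      have h1 : ‖g n t‖ = ((n:ℝ)+1) * ‖γ (t + ((n:ℝ)+1)⁻¹) - γ t‖ := by
        show ‖((n:ℝ)+1) • (γ (t + ((n:ℝ)+1)⁻¹) - γ t)‖ = _
        rw [norm_smul, Real.norm_eq_abs, abs_of_nonneg (by positivity : (0:ℝ) ≤ (n:ℝ)+1)]
      rw [h1]
      have h2 : ‖γ (t + ((n:ℝ)+1)⁻¹) - γ t‖ ≤ (K:ℝ) * ((n:ℝ)+1)⁻¹ := by
        have := h.dist_le_mul (t + ((n:ℝ)+1)⁻¹) t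
        simpa [dist_eq_norm, abs_inv, abs_of_nonneg (show (0:ℝ) ≤ (n:ℝ)+1 by positivity)]
          using this
      calc ((n:ℝ)+1) * ‖γ (t + ((n:ℝ)+1)⁻¹) - γ t‖ ≤ ((n:ℝ)+1) * ((K:ℝ) * ((n:ℝ)+1)⁻¹) :=
            mul_le_mul_of_nonneg_left h2 (by positivity)
        _ = (K:ℝ) := by field_simp
    · exact intervalIntegrable_const
    · filter_upwards [h.ae_differentiableAt] with t ht _
      exact slope_seq_lim ht.hasDerivAt
  -- combine
  have hlim2 : Tendsto (fun n : ℕ => ∫ t in a..b, g n t) atTop (nhds (γ b - γ a)) := by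
    have : Tendsto (fun n : ℕ => (((n:ℝ)+1) • ∫ t in b..(b + ((n:ℝ)+1)⁻¹), γ t) -
        (((n:ℝ)+1) • ∫ t in a..(a + ((n:ℝ)+1)⁻¹), γ t)) atTop (nhds (γ b - γ a)) :=
      (havg b).sub (havg a)
    refine this.congr fun n => ?_
    rw [key n, smul_sub]
  exact tendsto_nhds_unique hlim2 hdct
    
example : True := trivial

theorem deriv_norm_integrable {K : NNReal} {γ : ℝ → E3} (h : LipschitzWith K γ) (u v : ℝ) :
    IntervalIntegrable (fun s => ‖deriv γ s‖) volume u v := by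
  refine IntervalIntegrable.mono_fun' (g := fun _ => (K:ℝ)) intervalIntegrable_const
    (measurable_deriv γ).norm.aestronglyMeasurable ?_
  refine Eventually.of_forall fun s => ?_
  show ‖‖deriv γ s‖‖ ≤ (K:ℝ)
  rw [norm_norm]; exact lip_deriv_le K γ h s

/-- Chord lower bound for weighted cost. -/
theorem cost_ge_chord {f : E3 → ℝ} (hfm : Measurable f) (hf1 : ∀ z, f z ≤ 1)
    (hf0 : ∀ z, 0 ≤ f z) {K : NNReal} {γ : ℝ → E3} (h : LipschitzWith K γ)
    {u v c : ℝ} (huv : u ≤ v) (hc : 0 ≤ c) (hcf : ∀ t ∈ Set.Icc u v, c ≤ f (γ t)) :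
    c * ‖γ v - γ u‖ ≤ ∫ s in u..v, f (γ s) * ‖deriv γ s‖ := by
  have h1 : ‖γ v - γ u‖ ≤ ∫ s in u..v, ‖deriv γ s‖ := by
    rw [lip_ftc h u v]
    exact intervalIntegral.norm_integral_le_integral_norm huv
  calc c * ‖γ v - γ u‖ ≤ c * ∫ s in u..v, ‖deriv γ s‖ := mul_le_mul_of_nonneg_left h1 hc
    _ = ∫ s in u..v, c * ‖deriv γ s‖ := by rw [← intervalIntegral.integral_const_mul]
    _ ≤ ∫ s in u..v, f (γ s) * ‖deriv γ s‖ := by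
        apply intervalIntegral.integral_mono_on huv
          ((deriv_norm_integrable h u v).const_mul c) (integrand_integrable hfm hf1 hf0 h u v)
        exact fun s hs => mul_le_mul_of_nonneg_right (hcf s hs) (norm_nonneg _)

/-- Norm of the derivative of an affinely reparametrized curve. -/
theorem deriv_comp_affine (γ : ℝ → E3) {c : ℝ} (hc : c ≠ 0) (d s : ℝ) :
    ‖deriv (fun t => γ (c*t+d)) s‖ = |c| * ‖deriv γ (c*s+d)‖ := by
  have haff : HasDerivAt (fun t : ℝ => c*t+d) c s := by
    simpa using ((hasDerivAt_id s).const_mul c).add_const d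
  by_cases hd : DifferentiableAt ℝ γ (c*s+d)
  · have : HasDerivAt (fun t => γ (c*t+d)) (c • deriv γ (c*s+d)) s :=
      HasDerivAt.scomp s hd.hasDerivAt haff
    rw [this.deriv, norm_smul, Real.norm_eq_abs]
  · have hnd : ¬ DifferentiableAt ℝ (fun t => γ (c*t+d)) s := by
      intro hcon
      apply hd
      have haff2 : HasDerivAt (fun u : ℝ => c⁻¹*u + (-(c⁻¹*d))) c⁻¹ (c*s+d) := by
        simpa using ((hasDerivAt_id (c*s+d)).const_mul c⁻¹).add_const (-(c⁻¹*d))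
      have hpt : c⁻¹*(c*s+d) + (-(c⁻¹*d)) = s := by field_simp; ring
      have h2 : DifferentiableAt ℝ ((fun t => γ (c*t+d)) ∘ (fun u => c⁻¹*u + (-(c⁻¹*d))))
          (c*s+d) :=
        DifferentiableAt.comp (g := fun t => γ (c*t+d)) _ (hpt.symm ▸ hcon)
          haff2.differentiableAt
      have heq : ((fun t => γ (c*t+d)) ∘ (fun u => c⁻¹*u + (-(c⁻¹*d)))) = γ := by
        funext u; simp only [Function.comp_apply]; congr 1; field_simp; ring
      rwa [heq] at h2
    rw [deriv_zero_of_not_differentiableAt hd, deriv_zero_of_not_differentiableAt hnd]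
    simp

/-- Cost of an affinely reparametrized curve. -/
theorem cost_comp_affine (f : E3 → ℝ) (γ : ℝ → E3) {c : ℝ} (hc : c ≠ 0) (d p q : ℝ) :
    ∫ s in p..q, f (γ (c*s+d)) * ‖deriv (fun t => γ (c*t+d)) s‖
      = |c| * (c⁻¹ * ∫ t in (c*p+d)..(c*q+d), f (γ t) * ‖deriv γ t‖) := by
  have h1 : ∀ s, f (γ (c*s+d)) * ‖deriv (fun t => γ (c*t+d)) s‖
      = |c| * ((fun t => f (γ t) * ‖deriv γ t‖) (c*s+d)) := by
    intro s
    rw [deriv_comp_affine γ hc d s]; ring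
  rw [intervalIntegral.integral_congr (fun s _ => h1 s), intervalIntegral.integral_const_mul]
  have h2 := intervalIntegral.integral_comp_mul_add (a := p) (b := q)
    (fun t => f (γ t) * ‖deriv γ t‖) hc d
  rw [h2]
  simp [smul_eq_mul]


section Wdist

variable {f : E3 → ℝ}

theorem integral_congr_Ioo {g₁ g₂ : ℝ → ℝ} {u v : ℝ} (huv : u ≤ v)
    (h : ∀ s ∈ Set.Ioo u v, g₁ s = g₂ s) :
    ∫ s in u..v, g₁ s = ∫ s in u..v, g₂ s := by
  apply intervalIntegral.integral_congr_ae
  have hv : (volume : Measure ℝ) {v} = 0 := Real.volume_singleton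
  filter_upwards [compl_mem_ae_iff.2 hv] with s hs hmem
  have hmem' : s ∈ Set.Ioc u v := by rwa [Set.uIoc_of_le huv] at hmem
  exact h s ⟨hmem'.1, lt_of_le_of_ne hmem'.2 hs⟩

theorem cost_congr_Icc {γ₁ γ₂ : ℝ → E3} {u v : ℝ} (huv : u ≤ v)
    (h : ∀ t ∈ Set.Icc u v, γ₁ t = γ₂ t) :
    ∫ s in u..v, f (γ₁ s) * ‖deriv γ₁ s‖ = ∫ s in u..v, f (γ₂ s) * ‖deriv γ₂ s‖ := by
  apply integral_congr_Ioo huv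
  intro s hs
  have hnb : Set.Icc u v ∈ nhds s :=
    mem_nhds_iff.2 ⟨Set.Ioo u v, Set.Ioo_subset_Icc_self, isOpen_Ioo, hs⟩
  have hev : γ₁ =ᶠ[nhds s] γ₂ := eventually_of_mem hnb (fun t ht => h t ht)
  rw [hev.deriv_eq, h s (Set.Ioo_subset_Icc_self hs)]

theorem wdist_bddBelow (hf0 : ∀ z, 0 ≤ f z) (x y : E3) :
    BddBelow { L : ℝ | ∃ γ : ℝ → E3, (∃ K : NNReal, LipschitzWith K γ) ∧ γ 0 = x ∧ γ 1 = y ∧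
      L = ∫ s in (0:ℝ)..1, f (γ s) * ‖deriv γ s‖ } := by
  refine ⟨0, fun L hL => ?_⟩
  obtain ⟨γ, _, _, _, rfl⟩ := hL
  exact intervalIntegral.integral_nonneg zero_le_one
    (fun s _ => mul_nonneg (hf0 _) (norm_nonneg _))

theorem segment_lip (z w : E3) : LipschitzWith ‖w - z‖₊ (fun t : ℝ => z + t • (w - z)) := by
  apply LipschitzWith.of_dist_le_mul
  intro s t
  have : (z + s • (w - z)) - (z + t • (w - z)) = (s - t) • (w - z) := by
    rw [sub_smul]; abel
  rw [dist_eq_norm, this, norm_smul, Real.dist_eq, Real.norm_eq_abs, coe_nnnorm, mul_comm]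

theorem wdist_set_nonempty (x y : E3) :
    Set.Nonempty { L : ℝ | ∃ γ : ℝ → E3, (∃ K : NNReal, LipschitzWith K γ) ∧ γ 0 = x ∧ γ 1 = y ∧
      L = ∫ s in (0:ℝ)..1, f (γ s) * ‖deriv γ s‖ } :=
  ⟨_, (fun t : ℝ => x + t • (y - x)), ⟨_, segment_lip x y⟩, by simp, by simp, rfl⟩

theorem wdist_le_cost (hf0 : ∀ z, 0 ≤ f z) {x y : E3} {γ : ℝ → E3} {K : NNReal} (hγ : LipschitzWith K γ)
    (hx : γ 0 = x) (hy : γ 1 = y) :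
    wdist f x y ≤ ∫ s in (0:ℝ)..1, f (γ s) * ‖deriv γ s‖ :=
  csInf_le (wdist_bddBelow hf0 x y) ⟨γ, ⟨K, hγ⟩, hx, hy, rfl⟩

theorem le_wdist (hfm : Measurable f) (hf0 : ∀ z, 0 ≤ f z) (hf1 : ∀ z, f z ≤ 1) {c : ℝ} (hc : 0 ≤ c) (hcf : ∀ z, c ≤ f z) (x y : E3) :
    c * ‖y - x‖ ≤ wdist f x y := by
  refine le_csInf (wdist_set_nonempty x y) fun L hL => ?_
  obtain ⟨γ, ⟨K, hγ⟩, hx, hy, rfl⟩ := hL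
  have := cost_ge_chord hfm hf1 hf0 hγ (zero_le_one) hc (fun t _ => hcf (γ t))
  rwa [hx, hy] at this

theorem wdist_nonneg (hfm : Measurable f) (hf0 : ∀ z, 0 ≤ f z) (hf1 : ∀ z, f z ≤ 1) (x y : E3) : 0 ≤ wdist f x y := by
  have := le_wdist hfm hf0 hf1 le_rfl (fun z => hf0 z) x y
  simpa using this

theorem wdist_symm (hf0 : ∀ z, 0 ≤ f z) (x y : E3) : wdist f x y = wdist f y x := by
  have key : ∀ u v : E3, wdist f u v ≤ wdist f v u := by
    intro u v
    refine le_csInf (wdist_set_nonempty v u) fun L hL => ?_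
    obtain ⟨γ, ⟨K, hγ⟩, hv, hu, rfl⟩ := hL
    have hlip1 : LipschitzWith 1 (fun s : ℝ => (-1)*s + 1) := by
      apply LipschitzWith.of_dist_le_mul
      intro s t
      rw [Real.dist_eq, Real.dist_eq, show (-1)*s + 1 - ((-1)*t + 1) = -(s - t) by ring, abs_neg]
      simp
    have hrev : LipschitzWith (K*1) (fun s : ℝ => γ ((-1)*s + 1)) := hγ.comp hlip1
    have hcost := cost_comp_affine f γ (by norm_num : (-1:ℝ) ≠ 0) 1 0 1
    have hb1 : (-1:ℝ)*0 + 1 = 1 := by norm_num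
    have hb2 : (-1:ℝ)*1 + 1 = 0 := by norm_num
    rw [hb1, hb2] at hcost
    have hgoal : wdist f u v ≤ ∫ s in (0:ℝ)..1, f (γ ((-1)*s+1)) * ‖deriv (fun t => γ ((-1)*t+1)) s‖ :=
      wdist_le_cost hf0 hrev (by norm_num [hu]) (by norm_num [hv])
    rw [hcost, intervalIntegral.integral_symm 0 1] at hgoal
    norm_num at hgoal
    exact hgoal
  exact le_antisymm (key x y) (key y x)

theorem wdist_concat (hfm : Measurable f) (hf0 : ∀ z, 0 ≤ f z) (hf1 : ∀ z, f z ≤ 1)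
    {α β : ℝ → E3} {Kα Kβ : NNReal}
    (hα : LipschitzWith Kα α) (hβ : LipschitzWith Kβ β) (hjoin : α 1 = β 0) :
    wdist f (α 0) (β 1) ≤ (∫ s in (0:ℝ)..1, f (α s) * ‖deriv α s‖)
      + ∫ s in (0:ℝ)..1, f (β s) * ‖deriv β s‖ := by
  set γ : ℝ → E3 := fun t => if t ≤ 1/2 then α (2*t + 0) else β (2*t + (-1)) with hγdef
  have hγlip : LipschitzWith (2*Kα + 2*Kβ) γ := by
    apply LipschitzWith.of_dist_le_mul
    have aux : ∀ s t : ℝ, s ≤ t → dist (γ s) (γ t) ≤ (2*(Kα:ℝ) + 2*(Kβ:ℝ)) * dist s t := by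
      intro s t hst
      by_cases hs : s ≤ 1/2 <;> by_cases ht : t ≤ 1/2
      · have h1 : γ s = α (2*s + 0) := if_pos hs
        have h2 : γ t = α (2*t + 0) := if_pos ht
        rw [h1, h2]
        calc dist (α (2*s+0)) (α (2*t+0)) ≤ Kα * dist (2*s+0) (2*t+0) := hα.dist_le_mul _ _
          _ ≤ (2*(Kα:ℝ) + 2*(Kβ:ℝ)) * dist s t := by
              rw [Real.dist_eq, Real.dist_eq, show 2*s+0 - (2*t+0) = 2*(s-t) by ring, abs_mul]
              have : |(2:ℝ)| = 2 := by norm_num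
              rw [this]
              nlinarith [abs_nonneg (s - t), Kβ.coe_nonneg ]
      · -- s ≤ 1/2 < t
        push_neg at ht
        have h1 : γ s = α (2*s + 0) := if_pos hs
        have h2 : γ t = β (2*t + (-1)) := if_neg (not_le.2 ht)
        rw [h1, h2]
        calc dist (α (2*s+0)) (β (2*t+(-1)))
            ≤ dist (α (2*s+0)) (α 1) + dist (β 0) (β (2*t+(-1))) := by
              rw [hjoin]; exact dist_triangle _ _ _
          _ ≤ Kα * dist (2*s+0) 1 + Kβ * dist 0 (2*t+(-1)) :=
              add_le_add (hα.dist_le_mul _ _) (hβ.dist_le_mul _ _)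
          _ ≤ (2*(Kα:ℝ) + 2*(Kβ:ℝ)) * dist s t := by
              rw [Real.dist_eq, Real.dist_eq, Real.dist_eq]
              have e1 : |2*s + 0 - 1| = 1 - 2*s := by
                rw [abs_of_nonpos (by linarith)]; ring
              have e2 : |0 - (2*t + (-1))| = 2*t - 1 := by
                rw [abs_of_nonpos (by linarith)]; ring
              have e3 : |s - t| = t - s := by
                rw [abs_of_nonpos (by linarith)]; ring
              rw [e1, e2, e3]
              nlinarith [Kα.coe_nonneg, Kβ.coe_nonneg]
      · linarith
      · push_neg at hs
        have h1 : γ s = β (2*s + (-1)) := if_neg (not_le.2 hs)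
        have h2 : γ t = β (2*t + (-1)) := if_neg ht
        rw [h1, h2]
        calc dist (β (2*s+(-1))) (β (2*t+(-1))) ≤ Kβ * dist (2*s+(-1)) (2*t+(-1)) :=
              hβ.dist_le_mul _ _
          _ ≤ (2*(Kα:ℝ) + 2*(Kβ:ℝ)) * dist s t := by
              rw [Real.dist_eq, Real.dist_eq,
                show 2*s+(-1) - (2*t+(-1)) = 2*(s-t) by ring, abs_mul]
              have : |(2:ℝ)| = 2 := by norm_num
              rw [this]
              nlinarith [abs_nonneg (s - t), Kα.coe_nonneg]
    intro s t
    rcases le_total s t with h | h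
    · simpa using aux s t h
    · rw [dist_comm (γ s), dist_comm s]
      simpa using aux t s h
  have hsplit : (∫ s in (0:ℝ)..1, f (γ s) * ‖deriv γ s‖)
      = (∫ s in (0:ℝ)..(1/2), f (γ s) * ‖deriv γ s‖)
        + ∫ s in (1/2:ℝ)..1, f (γ s) * ‖deriv γ s‖ :=
    (intervalIntegral.integral_add_adjacent_intervals
      (integrand_integrable hfm hf1 hf0 hγlip 0 (1/2))
      (integrand_integrable hfm hf1 hf0 hγlip (1/2) 1)).symm
  have hleft : (∫ s in (0:ℝ)..(1/2), f (γ s) * ‖deriv γ s‖)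
      = ∫ s in (0:ℝ)..1, f (α s) * ‖deriv α s‖ := by
    have h1 : ∀ t ∈ Set.Icc (0:ℝ) (1/2), γ t = (fun t => α (2*t + 0)) t :=
      fun t ht => if_pos ht.2
    rw [cost_congr_Icc (by norm_num) h1, cost_comp_affine f α (by norm_num : (2:ℝ) ≠ 0) 0 0 (1/2)]
    norm_num
    ring
  have hright : (∫ s in (1/2:ℝ)..1, f (γ s) * ‖deriv γ s‖)
      = ∫ s in (0:ℝ)..1, f (β s) * ‖deriv β s‖ := by
    have h1 : ∀ t ∈ Set.Icc (1/2:ℝ) 1, γ t = (fun t => β (2*t + (-1))) t := by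
      intro t ht
      by_cases h : t ≤ 1/2
      · have ht2 : t = 1/2 := le_antisymm h ht.1
        show γ t = β (2*t + (-1))
        rw [ht2]
        show (if (1/2:ℝ) ≤ 1/2 then α (2*(1/2:ℝ) + 0) else β (2*(1/2:ℝ) + (-1)))
          = β (2*(1/2:ℝ) + (-1))
        rw [if_pos le_rfl]
        norm_num [hjoin]
      · exact if_neg h
    rw [cost_congr_Icc (by norm_num) h1,
      cost_comp_affine f β (by norm_num : (2:ℝ) ≠ 0) (-1) (1/2) 1]
    norm_num
    ring
  have hfinal := wdist_le_cost hf0 hγlip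
    (show γ 0 = α 0 by show (if (0:ℝ) ≤ 1/2 then α (2*(0:ℝ) + 0) else _) = α 0; norm_num)
    (show γ 1 = β 1 by show (if (1:ℝ) ≤ 1/2 then _ else β (2*(1:ℝ) + (-1))) = β 1; norm_num)
  rw [hsplit, hleft, hright] at hfinal
  exact hfinal

end Wdist

noncomputable def clampR (t : ℝ) : ℝ := max (min t 1) 0

theorem clampR_lip : LipschitzWith 1 clampR := (LipschitzWith.id.min_const 1).max_const 0

theorem clampR_of_mem {t : ℝ} (h : t ∈ Set.Icc (0:ℝ) 1) : clampR t = t := by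
  simp only [clampR, min_eq_left h.2, max_eq_left h.1]

theorem clampR_zero : clampR 0 = 0 := by norm_num [clampR]
theorem clampR_one : clampR 1 = 1 := by norm_num [clampR]

section Seg

variable {f : E3 → ℝ}

/-- The clamped segment from `z` to `w`. -/
noncomputable def cseg (z w : E3) : ℝ → E3 := fun t => z + clampR t • (w - z)

theorem cseg_lip (z w : E3) : LipschitzWith (‖w - z‖₊ * 1) (cseg z w) :=
  (segment_lip z w).comp clampR_lip

theorem cseg_zero (z w : E3) : cseg z w 0 = z := by simp [cseg, clampR_zero]
theorem cseg_one (z w : E3) : cseg z w 1 = w := by simp [cseg, clampR_one]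

theorem cseg_cost {z w : E3} {c : ℝ}
    (hconst : ∀ t ∈ Set.Icc (0:ℝ) 1, f (z + t • (w - z)) = c) :
    (∫ s in (0:ℝ)..1, f (cseg z w s) * ‖deriv (cseg z w) s‖) = c * ‖w - z‖ := by
  have h1 : ∀ t ∈ Set.Icc (0:ℝ) 1, cseg z w t = (fun t => z + t • (w - z)) t := by
    intro t ht; simp only [cseg, clampR_of_mem ht]
  rw [cost_congr_Icc zero_le_one h1]
  have hderiv : ∀ t : ℝ, deriv (fun t : ℝ => z + t • (w - z)) t = w - z := by
    intro t
    simpa using (((hasDerivAt_id t).smul_const (w - z)).const_add z).deriv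
  have h2 : Set.EqOn (fun s => f (z + s • (w - z)) * ‖deriv (fun t : ℝ => z + t • (w - z)) s‖)
      (fun _ => c * ‖w - z‖) (Set.uIcc (0:ℝ) 1) := by
    intro s hs
    rw [Set.uIcc_of_le zero_le_one] at hs
    simp only
    rw [hderiv s, hconst s hs]
  rw [intervalIntegral.integral_congr h2, intervalIntegral.integral_const]
  simp

end Seg

section Ball

variable {f : E3 → ℝ}

theorem exists_curve (hf0 : ∀ z, 0 ≤ f z) (x y : E3) {ε : ℝ} (hε : 0 < ε) :
    ∃ (γ : ℝ → E3) (K : NNReal), LipschitzWith K γ ∧ γ 0 = x ∧ γ 1 = y ∧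
      (∫ s in (0:ℝ)..1, f (γ s) * ‖deriv γ s‖) < wdist f x y + ε := by
  obtain ⟨L, hL, hlt⟩ := exists_lt_of_csInf_lt (wdist_set_nonempty x y)
    (lt_add_of_pos_right (wdist f x y) hε)
  obtain ⟨γ, ⟨K, hγ⟩, h0, h1, rfl⟩ := hL
  exact ⟨γ, K, hγ, h0, h1, hlt⟩

/-- Main ball lemma: the weighted distance from `p` to the closed ball equals
`wdist f p x₀ - cb * r`. -/
theorem ball_wdistSet (hfm : Measurable f) (hf0 : ∀ z, 0 ≤ f z) (hf1 : ∀ z, f z ≤ 1)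
    {x₀ p : E3} {r cb : ℝ} (hr : 0 < r) (hcb : 0 < cb)
    (hp : r < ‖p - x₀‖)
    (hball : ∀ z ∈ Metric.closedBall x₀ r, f z = cb)
    (htail : ∀ (γ : ℝ → E3) (K : NNReal), LipschitzWith K γ → ∀ t₁ : ℝ,
      t₁ ∈ Set.Icc (0:ℝ) 1 → ‖γ t₁ - x₀‖ = r → γ 1 = x₀ →
      cb * r ≤ ∫ s in t₁..(1:ℝ), f (γ s) * ‖deriv γ s‖) :
    sInf ((fun z => wdist f p z) '' Metric.closedBall x₀ r)
      = wdist f p x₀ - cb * r := by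
  have hx₀mem : x₀ ∈ Metric.closedBall x₀ r := Metric.mem_closedBall_self hr.le
  have hne : ((fun z => wdist f p z) '' Metric.closedBall x₀ r).Nonempty :=
    ⟨_, x₀, hx₀mem, rfl⟩
  have hbdd : BddBelow ((fun z => wdist f p z) '' Metric.closedBall x₀ r) := by
    refine ⟨0, fun L hL => ?_⟩
    obtain ⟨z, _, rfl⟩ := hL
    exact wdist_nonneg hfm hf0 hf1 p z
  -- segment from any ball point to x₀ has cost cb * dist
  have hsegcost : ∀ z ∈ Metric.closedBall x₀ r,
      (∫ s in (0:ℝ)..1, f (cseg z x₀ s) * ‖deriv (cseg z x₀) s‖) = cb * ‖x₀ - z‖ := by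
    intro z hz
    refine cseg_cost fun t ht => hball _ ?_
    have : z + t • (x₀ - z) - x₀ = (1 - t) • (z - x₀) := by
      module
    rw [Metric.mem_closedBall, dist_eq_norm, this, norm_smul, Real.norm_eq_abs,
      abs_of_nonneg (by linarith [ht.2])]
    have h2 : ‖z - x₀‖ ≤ r := by
      rw [← dist_eq_norm]; exact hz
    nlinarith [norm_nonneg (z - x₀), ht.1, ht.2]
  apply le_antisymm
  · -- ≤ : hitting time argument
    refine le_of_forall_pos_le_add fun ε hε => ?_
    obtain ⟨γ, K, hγ, hγ0, hγ1, hcost⟩ := exists_curve hf0 p x₀ hε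
    set S : Set ℝ := Set.Icc (0:ℝ) 1 ∩ γ ⁻¹' (Metric.closedBall x₀ r) with hS
    have hSclosed : IsClosed S :=
      isClosed_Icc.inter (Metric.isClosed_closedBall.preimage hγ.continuous)
    have hSne : S.Nonempty := ⟨1, ⟨zero_le_one, le_rfl⟩, by
      simp only [Set.mem_preimage, hγ1]; exact hx₀mem⟩
    have hSbdd : BddBelow S := ⟨0, fun t ht => ht.1.1⟩
    set t₁ := sInf S with ht₁def
    have ht₁mem : t₁ ∈ S := hSclosed.csInf_mem hSne hSbdd
    have ht₁Icc : t₁ ∈ Set.Icc (0:ℝ) 1 := ht₁mem.1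
    have hbefore : ∀ t, 0 ≤ t → t < t₁ → γ t ∉ Metric.closedBall x₀ r := by
      intro t ht0 htlt hmem
      have : t ∈ S := ⟨⟨ht0, htlt.le.trans ht₁Icc.2⟩, hmem⟩
      exact absurd (csInf_le hSbdd this) (not_le.2 htlt)
    have ht₁pos : 0 < t₁ := by
      rcases lt_or_eq_of_le ht₁Icc.1 with h | h
      · exact h
      · exfalso
        have := ht₁mem.2
        rw [← h] at this
        simp only [Set.mem_preimage, hγ0, Metric.mem_closedBall, dist_eq_norm] at this
        exact absurd this (not_le.2 hp)
    have hsphere : ‖γ t₁ - x₀‖ = r := by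
      refine le_antisymm ?_ ?_
      · have := ht₁mem.2
        simpa [Metric.mem_closedBall, dist_eq_norm] using this
      · have hcont : Filter.Tendsto (fun t => ‖γ t - x₀‖) (nhdsWithin t₁ (Set.Iio t₁))
            (nhds ‖γ t₁ - x₀‖) :=
          ((hγ.continuous.sub continuous_const).norm.continuousAt).continuousWithinAt
        refine ge_of_tendsto hcont ?_
        filter_upwards [Ioo_mem_nhdsLT_of_mem (Set.mem_Ioc.2 ⟨ht₁pos, le_rfl⟩)] with t ht
        have := hbefore t ht.1.le ht.2
        simp only [Metric.mem_closedBall, dist_eq_norm, not_le] at this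
        exact this.le
    have htl := htail γ K hγ t₁ ht₁Icc hsphere hγ1
    -- split cost
    have hsplit : (∫ s in (0:ℝ)..1, f (γ s) * ‖deriv γ s‖)
        = (∫ s in (0:ℝ)..t₁, f (γ s) * ‖deriv γ s‖)
          + ∫ s in t₁..(1:ℝ), f (γ s) * ‖deriv γ s‖ :=
      (intervalIntegral.integral_add_adjacent_intervals
        (integrand_integrable hfm hf1 hf0 hγ 0 t₁)
        (integrand_integrable hfm hf1 hf0 hγ t₁ 1)).symm
    -- head reparametrization
    have haff : LipschitzWith t₁.toNNReal (fun s : ℝ => t₁*s + 0) := by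
      apply LipschitzWith.of_dist_le_mul
      intro s t
      rw [Real.dist_eq, Real.dist_eq, show t₁*s + 0 - (t₁*t + 0) = t₁*(s-t) by ring, abs_mul,
        Real.coe_toNNReal t₁ ht₁pos.le, abs_of_nonneg ht₁pos.le]
    have hδlip : LipschitzWith (K * t₁.toNNReal) (fun s : ℝ => γ (t₁*s + 0)) := hγ.comp haff
    have hδcost : (∫ s in (0:ℝ)..1, f (γ (t₁*s+0)) * ‖deriv (fun t => γ (t₁*t+0)) s‖)
        = ∫ s in (0:ℝ)..t₁, f (γ s) * ‖deriv γ s‖ := by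
      rw [cost_comp_affine f γ (ne_of_gt ht₁pos) 0 0 1]
      rw [abs_of_nonneg ht₁pos.le]
      rw [show t₁*0 + 0 = (0:ℝ) by ring, show t₁*1 + 0 = t₁ by ring]
      field_simp
    have hwd : wdist f p (γ t₁) ≤ ∫ s in (0:ℝ)..t₁, f (γ s) * ‖deriv γ s‖ := by
      rw [← hδcost]
      exact wdist_le_cost hf0 hδlip (by rw [show t₁*0+0 = (0:ℝ) by ring]; exact hγ0)
        (by rw [show t₁*1+0 = t₁ by ring])
    have hmem' : wdist f p (γ t₁) ∈ (fun z => wdist f p z) '' Metric.closedBall x₀ r :=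
      ⟨γ t₁, by rw [Metric.mem_closedBall, dist_eq_norm, hsphere], rfl⟩
    have : sInf ((fun z => wdist f p z) '' Metric.closedBall x₀ r) ≤ wdist f p (γ t₁) :=
      csInf_le hbdd hmem'
    linarith
  · -- ≥ : triangle via segment
    refine le_csInf hne ?_
    rintro L ⟨z, hz, rfl⟩
    suffices h : wdist f p x₀ ≤ wdist f p z + cb * r by linarith
    refine le_of_forall_pos_le_add fun ε hε => ?_
    obtain ⟨α, Kα, hα, hα0, hα1, hαcost⟩ := exists_curve hf0 p z hε
    have hjoin : α 1 = cseg z x₀ 0 := by rw [hα1, cseg_zero]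
    have hconcat := wdist_concat hfm hf0 hf1 hα (cseg_lip z x₀) hjoin
    rw [hα0, cseg_one, hsegcost z hz] at hconcat
    have hzr : ‖x₀ - z‖ ≤ r := by
      rw [norm_sub_rev, ← dist_eq_norm]; exact hz
    have : cb * ‖x₀ - z‖ ≤ cb * r := mul_le_mul_of_nonneg_left hzr hcb.le
    linarith

end Ball

/-- If `x₀ ∉ ∂ω` lies on a geodesic joining `x` and `y` in `(ℝ³, d_{a²})`, then
for all small enough `r`,
`d_{a²}^{B̄(x₀,r)}(x,y) = d_{a²}(x,y) - 2 a(x₀)² r`. -/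
theorem stmt_13 (b : ℝ) (hb : 0 < b) (hb1 : b < 1) (ω : Set E3)
    (hconv : StrictConvex ℝ ω) (hopen : IsOpen ω) (hbdd : Bornology.IsBounded ω)
    (x₀ x y : E3) (hxy : x ≠ y) (hx : x₀ ≠ x) (hy : x₀ ≠ y)
    (hfr : x₀ ∉ frontier ω)
    (hgeo : wdist (fun z => (aFun b ω z)^2) x y =
      wdist (fun z => (aFun b ω z)^2) x x₀ + wdist (fun z => (aFun b ω z)^2) x₀ y) :
    ∃ r₀ > (0:ℝ), ∀ r : ℝ, 0 < r → r < r₀ →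
      wdistK (fun z => (aFun b ω z)^2) (Metric.closedBall x₀ r) x y =
        wdist (fun z => (aFun b ω z)^2) x y - 2 * (aFun b ω x₀)^2 * r := by
  set f : E3 → ℝ := fun z => (aFun b ω z)^2 with hfdef
  have hfeq : ∀ z, f z = if z ∈ ω then b^2 else 1 := by
    intro z; simp only [hfdef, aFun]; split_ifs <;> norm_num
  have hb2pos : (0:ℝ) < b^2 := by positivity
  have hb2le : b^2 ≤ 1 := by nlinarith
  have hfm : Measurable f := by
    have : f = fun z => if z ∈ ω then b^2 else 1 := funext hfeq
    rw [this]
    exact Measurable.ite hopen.measurableSet measurable_const measurable_const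
  have hf0 : ∀ z, 0 ≤ f z := by
    intro z; rw [hfeq]; split_ifs <;> [positivity; norm_num]
  have hf1 : ∀ z, f z ≤ 1 := by
    intro z; rw [hfeq]; split_ifs <;> [exact hb2le; norm_num]
  have hlow : ∀ z, b^2 ≤ f z := by
    intro z; rw [hfeq]; split_ifs
    · exact le_rfl
    · exact hb2le
  have hout : ∀ z, z ∉ ω → f z = 1 := by
    intro z hz; rw [hfeq, if_neg hz]
  have hin : ∀ z, z ∈ ω → f z = b^2 := by
    intro z hz; rw [hfeq, if_pos hz]
  have hxpos : 0 < ‖x - x₀‖ := by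
    rw [norm_pos_iff, sub_ne_zero]; exact fun h => hx h.symm
  have hypos : 0 < ‖y - x₀‖ := by
    rw [norm_pos_iff, sub_ne_zero]; exact fun h => hy h.symm
  -- dichotomy
  have hcases : x₀ ∈ ω ∨ x₀ ∉ closure ω := by
    by_cases h : x₀ ∈ closure ω
    · left
      rcases (closure_eq_interior_union_frontier ω ▸ h) with h' | h'
      · rwa [hopen.interior_eq] at h'
      · exact absurd h' hfr
    · right; exact h
  -- common final step
  have final : ∀ cb r₀ : ℝ, 0 < cb → 0 < r₀ → (aFun b ω x₀)^2 = cb →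
      (∀ r : ℝ, 0 < r → r < r₀ →
        (wdistSet f x (Metric.closedBall x₀ r) = wdist f x x₀ - cb * r) ∧
        (wdistSet f y (Metric.closedBall x₀ r) = wdist f y x₀ - cb * r)) →
      ∃ r₀ > (0:ℝ), ∀ r : ℝ, 0 < r → r < r₀ →
        wdistK f (Metric.closedBall x₀ r) x y = wdist f x y - 2 * (aFun b ω x₀)^2 * r := by
    intro cb r₀ hcbpos hr₀pos hcbeq hsets
    refine ⟨r₀, hr₀pos, fun r hr hrlt => ?_⟩
    obtain ⟨hsx, hsy⟩ := hsets r hr hrlt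
    have hysymm : wdist f y x₀ = wdist f x₀ y := wdist_symm hf0 y x₀
    have hsum : wdistSet f x (Metric.closedBall x₀ r) + wdistSet f y (Metric.closedBall x₀ r)
        = wdist f x y - 2 * cb * r := by
      rw [hsx, hsy, hysymm, hgeo]; ring
    rw [wdistK, hsum, hcbeq]
    have : wdist f x y - 2 * cb * r ≤ wdist f x y := by nlinarith
    rw [min_eq_right this]
  rcases hcases with hx₀ω | hx₀out
  · -- inside case: cb = b^2
    obtain ⟨ε₀, hε₀pos, hε₀sub⟩ := Metric.isOpen_iff.1 hopen x₀ hx₀ω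
    refine final (b^2) (min (ε₀/2) (min (‖x - x₀‖/2) (‖y - x₀‖/2))) hb2pos
      (lt_min (by positivity) (lt_min (by positivity) (by positivity)))
      (by simp [aFun, hx₀ω]) ?_
    intro r hr hrlt
    have hrε : r < ε₀ := by
      have := lt_of_lt_of_le hrlt (min_le_left _ _); linarith
    have hballω : ∀ z ∈ Metric.closedBall x₀ r, z ∈ ω := by
      intro z hz
      exact hε₀sub (lt_of_le_of_lt (Metric.mem_closedBall.1 hz) hrε)
    have hball : ∀ z ∈ Metric.closedBall x₀ r, f z = b^2 := fun z hz => hin z (hballω z hz)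
    have htail : ∀ (γ : ℝ → E3) (K : NNReal), LipschitzWith K γ → ∀ t₁ : ℝ,
        t₁ ∈ Set.Icc (0:ℝ) 1 → ‖γ t₁ - x₀‖ = r → γ 1 = x₀ →
        b^2 * r ≤ ∫ s in t₁..(1:ℝ), f (γ s) * ‖deriv γ s‖ := by
      intro γ K hγ t₁ ht hsph hend
      have := cost_ge_chord hfm hf1 hf0 hγ ht.2 hb2pos.le (fun t _ => hlow (γ t))
      rwa [hend, show ‖x₀ - γ t₁‖ = r by rw [norm_sub_rev]; exact hsph] at this
    constructor
    · exact ball_wdistSet hfm hf0 hf1 hr hb2pos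
        (by have := lt_of_lt_of_le hrlt ((min_le_right _ _).trans (min_le_left _ _)); linarith)
        hball htail
    · exact ball_wdistSet hfm hf0 hf1 hr hb2pos
        (by have := lt_of_lt_of_le hrlt ((min_le_right _ _).trans (min_le_right _ _)); linarith)
        hball htail
  · -- outside case: cb = 1
    have hopen' : IsOpen (closure ω)ᶜ := isClosed_closure.isOpen_compl
    obtain ⟨δ, hδpos, hδsub⟩ := Metric.isOpen_iff.1 hopen' x₀ hx₀out
    have hx₀ω : x₀ ∉ ω := fun h => hx₀out (subset_closure h)
    refine final 1 (min (b^2*δ/2) (min (‖x - x₀‖/2) (‖y - x₀‖/2))) one_pos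
      (lt_min (by positivity) (lt_min (by positivity) (by positivity)))
      (by simp [aFun, hx₀ω]) ?_
    intro r hr hrlt
    have hrδ2 : r < b^2*δ/2 := lt_of_lt_of_le hrlt (min_le_left _ _)
    have hrδ : r < δ := by nlinarith
    have hballout : ∀ z ∈ Metric.closedBall x₀ r, z ∉ ω := by
      intro z hz hzω
      exact hδsub (lt_of_le_of_lt (Metric.mem_closedBall.1 hz) hrδ) (subset_closure hzω)
    have hball : ∀ z ∈ Metric.closedBall x₀ r, f z = 1 := fun z hz => hout z (hballout z hz)
    have hδdist : ∀ z ∈ ω, δ ≤ ‖z - x₀‖ := by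
      intro z hz
      by_contra hlt
      push_neg at hlt
      exact hδsub (by rwa [Metric.mem_ball, dist_eq_norm]) (subset_closure hz)
    have htail : ∀ (γ : ℝ → E3) (K : NNReal), LipschitzWith K γ → ∀ t₁ : ℝ,
        t₁ ∈ Set.Icc (0:ℝ) 1 → ‖γ t₁ - x₀‖ = r → γ 1 = x₀ →
        1 * r ≤ ∫ s in t₁..(1:ℝ), f (γ s) * ‖deriv γ s‖ := by
      intro γ K hγ t₁ ht hsph hend
      by_cases hev : ∀ s ∈ Set.Icc t₁ 1, γ s ∉ ω
      · have := cost_ge_chord hfm hf1 hf0 hγ ht.2 zero_le_one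
          (fun t htt => le_of_eq (hout (γ t) (hev t htt)).symm)
        rwa [hend, show ‖x₀ - γ t₁‖ = r by rw [norm_sub_rev]; exact hsph] at this
      · push_neg at hev
        obtain ⟨s₁, hs₁, hs₁ω⟩ := hev
        have hsplit : (∫ s in t₁..(1:ℝ), f (γ s) * ‖deriv γ s‖)
            = (∫ s in t₁..s₁, f (γ s) * ‖deriv γ s‖)
              + ∫ s in s₁..(1:ℝ), f (γ s) * ‖deriv γ s‖ :=
          (intervalIntegral.integral_add_adjacent_intervals
            (integrand_integrable hfm hf1 hf0 hγ t₁ s₁)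
            (integrand_integrable hfm hf1 hf0 hγ s₁ 1)).symm
        have c1 := cost_ge_chord hfm hf1 hf0 hγ hs₁.1 hb2pos.le (fun t _ => hlow (γ t))
        have c2 := cost_ge_chord hfm hf1 hf0 hγ hs₁.2 hb2pos.le (fun t _ => hlow (γ t))
        have hd1 : δ ≤ ‖γ s₁ - x₀‖ := hδdist _ hs₁ω
        have htri : ‖γ s₁ - x₀‖ ≤ ‖γ s₁ - γ t₁‖ + ‖γ t₁ - x₀‖ := by
          have := dist_triangle (γ s₁) (γ t₁) x₀
          simpa [dist_eq_norm] using this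
        have hchord1 : δ - r ≤ ‖γ s₁ - γ t₁‖ := by rw [hsph] at htri; linarith
        have hchord2 : δ ≤ ‖γ 1 - γ s₁‖ := by
          rw [hend, norm_sub_rev]; exact hd1
        rw [hsplit]
        have e1 : b^2 * (δ - r) ≤ ∫ s in t₁..s₁, f (γ s) * ‖deriv γ s‖ :=
          le_trans (mul_le_mul_of_nonneg_left hchord1 hb2pos.le) c1
        have e2 : b^2 * δ ≤ ∫ s in s₁..(1:ℝ), f (γ s) * ‖deriv γ s‖ :=
          le_trans (mul_le_mul_of_nonneg_left hchord2 hb2pos.le) c2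
        nlinarith
    constructor
    · exact ball_wdistSet hfm hf0 hf1 hr one_pos
        (by have := lt_of_lt_of_le hrlt ((min_le_right _ _).trans (min_le_left _ _)); linarith)
        hball htail
    · exact ball_wdistSet hfm hf0 hf1 hr one_pos
        (by have := lt_of_lt_of_le hrlt ((min_le_right _ _).trans (min_le_right _ _)); linarith)
        hball htail

end
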